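/- arXiv:1203.0625 — 7 statements merged into one kernel-verified Lean document; each statement's English description precedes it below -/
import Mathlib

section
/- Let 𝔤 be so(3) with basis e₁, e₂, e₃ and brackets [e₁,e₂] = e₃, [e₂,e₃] = e₁, [e₃,e₁] = e₂. Then every one-dimensional subalgebra of 𝔤 is the image of span{e₁} under some inner automorphism of 𝔤 (i.e., under a composition of maps e^{t·ad(e₁)} and e^{s·ad(e₃)}). -/
open Matrix Real

/-!
`ad e₁` and `ad e₃` are infinitesimal rotations `A` with `A ^ 3 = -A`, so their exponentials are
rotations given by Rodrigues' formula `exp (s • A) = 1 + sin s • A + (1 - cos s) • A ^ 2`.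
Hence `exp (t • ad e₁) (exp (s • ad e₃) e₁) = (cos s, sin s cos t, sin s sin t)`, and every nonzero
vector of `ℝ³` is a nonzero multiple of such a vector (spherical coordinates), so it spans the
image of `span {e₁}`.
-/

section Rodrigues

variable {𝔸 : Type*} [Ring 𝔸] [Algebra ℝ 𝔸] {A : 𝔸}

theorem pow_odd_of_pow_three_eq_neg (hA : A ^ 3 = -A) (k : ℕ) :
    A ^ (2 * k + 1) = (-1 : ℝ) ^ k • A := by
  induction k with
  | zero => simp
  | succ k ih =>
    calc A ^ (2 * (k + 1) + 1) = A ^ (2 * k) * A ^ 3 := by rw [← pow_add]; ring_nf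
      _ = (-1 : ℝ) ^ (k + 1) • A := by
        rw [hA, mul_neg, ← pow_succ, ih, pow_succ, mul_neg_one, neg_smul]

theorem pow_even_succ_of_pow_three_eq_neg (hA : A ^ 3 = -A) (k : ℕ) :
    A ^ (2 * k + 2) = (-1 : ℝ) ^ k • A ^ 2 := by
  rw [pow_succ, pow_odd_of_pow_three_eq_neg hA, smul_mul_assoc, ← sq]

variable [TopologicalSpace 𝔸] [IsTopologicalRing 𝔸] [ContinuousSMul ℝ 𝔸] [T2Space 𝔸]

theorem exp_smul_of_pow_three_eq_neg (hA : A ^ 3 = -A) (s : ℝ) :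
    NormedSpace.exp (s • A) = 1 + sin s • A + (1 - cos s) • A ^ 2 := by
  have hodd : HasSum (fun k : ℕ => ((2 * k + 1).factorial : ℝ)⁻¹ • (s • A) ^ (2 * k + 1))
      (sin s • A) := by
    convert (hasSum_sin s).smul_const A using 2 with k
    rw [smul_pow, pow_odd_of_pow_three_eq_neg hA, smul_smul, smul_smul]
    ring_nf
  -- the `k = 0` term is `1` rather than `(-1) ^ 0 • A ^ 2`, hence the correction `1 + A ^ 2` there
  have heven : HasSum (fun k : ℕ => ((2 * k).factorial : ℝ)⁻¹ • (s • A) ^ (2 * k))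
      (1 + (1 - cos s) • A ^ 2) := by
    have hcos := ((hasSum_cos s).smul_const (-A ^ 2)).add (hasSum_ite_eq 0 (1 + A ^ 2))
    convert hcos using 1
    · funext k
      rcases k with _ | k
      · simp
      · rw [if_neg k.succ_ne_zero, add_zero, smul_pow, show 2 * (k + 1) = 2 * k + 2 by ring,
          pow_even_succ_of_pow_three_eq_neg hA, smul_smul, smul_smul, smul_neg, ← neg_smul]
        ring_nf
    · rw [sub_smul, one_smul, smul_neg]; abel
  rw [NormedSpace.exp_eq_tsum ℝ, add_right_comm]
  exact (HasSum.even_add_odd (f := fun n => (n.factorial : ℝ)⁻¹ • (s • A) ^ n) heven hodd).tsum_eq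

end Rodrigues

theorem exists_polar_coords (x y : ℝ) : ∃ r θ : ℝ, r * cos θ = x ∧ r * sin θ = y :=
  ⟨‖(⟨x, y⟩ : ℂ)‖, Complex.arg ⟨x, y⟩, Complex.norm_mul_cos_arg _, Complex.norm_mul_sin_arg _⟩

theorem exists_spherical_coords (v : Fin 3 → ℝ) :
    ∃ r s t : ℝ, v = r • ![cos s, sin s * cos t, sin s * sin t] := by
  obtain ⟨ρ, t, h1, h2⟩ := exists_polar_coords (v 1) (v 2)
  obtain ⟨r, s, h0, hρ⟩ := exists_polar_coords (v 0) ρ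
  refine ⟨r, s, t, ?_⟩
  ext i
  fin_cases i
  · show v 0 = r * cos s
    exact h0.symm
  · show v 1 = r * (sin s * cos t)
    linear_combination -h1 - cos t * hρ
  · show v 2 = r * (sin s * sin t)
    linear_combination -h2 - sin t * hρ

theorem adE1_pow_three : (!![0, 0, 0; 0, 0, -1; 0, 1, 0] : Matrix (Fin 3) (Fin 3) ℝ) ^ 3 =
    -!![0, 0, 0; 0, 0, -1; 0, 1, 0] := by
  ext i j
  fin_cases i <;> fin_cases j <;> simp [pow_succ, mul_apply, Fin.sum_univ_three]

theorem adE3_pow_three : (!![0, -1, 0; 1, 0, 0; 0, 0, 0] : Matrix (Fin 3) (Fin 3) ℝ) ^ 3 =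
    -!![0, -1, 0; 1, 0, 0; 0, 0, 0] := by
  ext i j
  fin_cases i <;> fin_cases j <;> simp [pow_succ, mul_apply, Fin.sum_univ_three]

theorem exp_smul_adE1_mulVec (t x y : ℝ) :
    NormedSpace.exp (t • !![0, 0, 0; 0, 0, -1; 0, 1, 0] : Matrix (Fin 3) (Fin 3) ℝ) *ᵥ ![x, y, 0] =
      ![x, y * cos t, y * sin t] := by
  rw [exp_smul_of_pow_three_eq_neg adE1_pow_three]
  ext i
  fin_cases i <;> simp [sq, mulVec, dotProduct, Fin.sum_univ_three] <;> ring

theorem exp_smul_adE3_mulVec_e1 (s : ℝ) :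
    NormedSpace.exp (s • !![0, -1, 0; 1, 0, 0; 0, 0, 0] : Matrix (Fin 3) (Fin 3) ℝ) *ᵥ ![1, 0, 0] =
      ![cos s, sin s, 0] := by
  rw [exp_smul_of_pow_three_eq_neg adE3_pow_three]
  ext i
  fin_cases i <;> simp [sq, mulVec, dotProduct, Fin.sum_univ_three]

/-- In so(3), realized on ℝ³ with ad e₁ and ad e₃ given by the matrices `adE1`,
`adE3` below (basis e₁,e₂,e₃ with brackets [e₁,e₂]=e₃, [e₂,e₃]=e₁, [e₃,e₁]=e₂),
every one-dimensional subalgebra (i.e. every line, each line being automatically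
a subalgebra) is the image of span{e₁} under an inner automorphism of the form
e^{t·ad e₁} ∘ e^{s·ad e₃}. -/
theorem so3_lines_conjugate
    (adE1 adE3 : Matrix (Fin 3) (Fin 3) ℝ)
    (hE1 : adE1 = !![0, 0, 0; 0, 0, -1; 0, 1, 0])
    (hE3 : adE3 = !![0, -1, 0; 1, 0, 0; 0, 0, 0]) :
    ∀ p : Submodule ℝ (Fin 3 → ℝ), Module.finrank ℝ p = 1 →
      ∃ t s : ℝ,
        Submodule.map
          ((NormedSpace.exp (t • adE1)).mulVecLin.comp
            (NormedSpace.exp (s • adE3)).mulVecLin)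
          (Submodule.span ℝ {(![1, 0, 0] : Fin 3 → ℝ)}) = p := by
  intro p hp
  obtain ⟨v, hv0, -⟩ := finrank_eq_one_iff'.mp hp
  obtain ⟨r, s, t, hv⟩ := exists_spherical_coords v
  have hr : r ≠ 0 := by
    rintro rfl
    exact hv0 (Subtype.ext (by simpa using hv))
  refine ⟨t, s, ?_⟩
  rw [Submodule.map_span, Set.image_singleton]
  simp only [LinearMap.comp_apply, mulVecLin_apply, hE1, hE3, exp_smul_adE3_mulVec_e1,
    exp_smul_adE1_mulVec]
  rw [← Submodule.span_singleton_smul_eq (IsUnit.mk0 r hr), ← hv]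
  refine Submodule.eq_of_le_of_finrank_eq ?_ ?_
  · exact (Submodule.span_singleton_le_iff_mem _ _).mpr v.2
  · rw [hp, finrank_span_singleton (by simpa using hv0)]
end

section
/- Let 𝔤 be the Lie algebra L(4,1) with nonzero brackets [e₂,e₄] = e₁, [e₃,e₄] = e₂, and let 𝔥 = span{e₄}, 𝔪 = span{−e₃, e₂, e₁}. Then the space of symmetric bilinear forms B on 𝔪 satisfying B([e₄,u],v) + B(u,[e₄,v]) = 0 for all u,v ∈ 𝔪 is two-dimensional, spanned (in the basis m₁ = −e₃, m₂ = e₂, m₃ = e₁) by the forms with matrices D₁ = diag(1,0,0) and N = the matrix with 1 in entries (1,3),(3,1),(2,2) and 0 elsewhere. -/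
/-!
Since `m = ![-(e 2), e 1, e 0]` is linearly independent, the matrix `A` of `ad (e 3)` on `𝔪` is
forced by the brackets: `ad (e 3)` sends `m 0 ↦ m 1 ↦ -m 2 ↦ 0`. For a symmetric `M` the entries of
`Aᵀ M + M A = 0` then say `M₀₁ = M₁₂ = M₂₂ = 0` and `M₁₁ = M₀₂`, leaving exactly the two free
parameters `M₀₀` and `M₀₂`.
-/

open Matrix

theorem Matrix.eq_of_forall_sum_smul_eq {κ ι R M : Type*} [Fintype κ] [Semiring R]
    [AddCommMonoid M] [Module R M] {v : κ → M} (hv : LinearIndependent R v)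
    {A B : Matrix κ ι R} (h : ∀ i, ∑ j, A j i • v j = ∑ j, B j i • v j) : A = B :=
  Matrix.ext fun j i => Fintype.linearIndependent_iffₛ.mp hv _ _ (h i) j

theorem finrank_span_pair_eq_two {R M : Type*} [Ring R] [Nontrivial R] [StrongRankCondition R]
    [AddCommGroup M] [Module R M] {u v : M} (h : LinearIndependent R ![u, v]) :
    Module.finrank R (Submodule.span R {u, v}) = 2 := by
  rw [← Matrix.range_cons_cons_empty u v ![], finrank_span_eq_card h, Fintype.card_fin]

theorem Module.Basis.linearIndependent_neg_two_one_zero {R M : Type*} [Ring R] [AddCommGroup M]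
    [Module R M] (e : Module.Basis (Fin 4) R M) :
    LinearIndependent R ![-(e 2), e 1, e 0] := by
  convert (e.linearIndependent.comp ![2, 1, 0] (by decide)).units_smul ![-1, 1, 1] using 1
  ext i
  fin_cases i <;> simp

theorem L41_lie_e3_complement {R L : Type*} [CommRing R] [LieRing L] [LieAlgebra R L]
    (e : Fin 4 → L) (h24 : ⁅e 1, e 3⁆ = e 0) (h34 : ⁅e 2, e 3⁆ = e 1) (h14 : ⁅e 0, e 3⁆ = 0)
    (i : Fin 3) :
    ⁅e 3, ![-(e 2), e 1, e 0] i⁆ =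
      ∑ j, (!![0, 0, 0; 1, 0, 0; 0, -1, 0] : Matrix (Fin 3) (Fin 3) R) j i •
        ![-(e 2), e 1, e 0] j := by
  have h31 : ⁅e 3, e 1⁆ = -e 0 := by rw [← lie_skew, h24]
  have h30 : ⁅e 3, e 0⁆ = 0 := by rw [← lie_skew, h14, neg_zero]
  fin_cases i <;> simp [Fin.sum_univ_three, h31, h30, h34]

theorem L41_isSymm_and_invariant_iff_mem_span (M : Matrix (Fin 3) (Fin 3) ℝ) :
    M.IsSymm ∧ (!![0, 0, 0; 1, 0, 0; 0, -1, 0] : Matrix (Fin 3) (Fin 3) ℝ)ᵀ * M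
        + M * !![0, 0, 0; 1, 0, 0; 0, -1, 0] = 0 ↔
      M ∈ Submodule.span ℝ {!![1, 0, 0; 0, 0, 0; 0, 0, 0], !![0, 0, 1; 0, 1, 0; 1, 0, 0]} := by
  rw [Submodule.mem_span_pair]
  constructor
  · rintro ⟨hM, h⟩
    have entry (i j : Fin 3) := congrFun (congrFun h i) j
    simp only [Matrix.add_apply, Matrix.mul_apply, Fin.sum_univ_three, Matrix.zero_apply] at entry
    have h01 : M 1 0 + M 0 1 = 0 := by simpa using entry 0 0
    have h11 : M 1 1 - M 0 2 = 0 := by simpa [sub_eq_add_neg] using entry 0 1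
    have h12 : M 1 2 = 0 := by simpa using entry 0 2
    have h22 : M 2 2 = 0 := by simpa using entry 1 2
    refine ⟨M 0 0, M 0 2, ?_⟩
    ext i j
    fin_cases i <;> fin_cases j <;> simp <;>
      linarith [hM.apply 0 1, hM.apply 0 2, hM.apply 1 2]
  · rintro ⟨a, b, rfl⟩
    refine ⟨?_, ?_⟩ <;> ext i j <;>
      fin_cases i <;> fin_cases j <;> simp [Matrix.mul_apply, Fin.sum_univ_three]

theorem L41_invariant_quadratic_forms_general (L : Type*) [LieRing L] [LieAlgebra ℝ L]
    (e : Module.Basis (Fin 4) ℝ L)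
    (h24 : ⁅e 1, e 3⁆ = e 0) (h34 : ⁅e 2, e 3⁆ = e 1)
    (h14 : ⁅e 0, e 3⁆ = 0)
    (m : Fin 3 → L) (hm : m = ![-(e 2), e 1, e 0])
    (A : Matrix (Fin 3) (Fin 3) ℝ)
    (hA : ∀ i, ⁅e 3, m i⁆ = ∑ j, A j i • m j) :
    {M : Matrix (Fin 3) (Fin 3) ℝ | M.IsSymm ∧ Aᵀ * M + M * A = 0}
      = (Submodule.span ℝ
          ({!![1,0,0;0,0,0;0,0,0], !![0,0,1;0,1,0;1,0,0]} :
            Set (Matrix (Fin 3) (Fin 3) ℝ)) : Set (Matrix (Fin 3) (Fin 3) ℝ)) ∧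
    Module.finrank ℝ (Submodule.span ℝ
          ({!![1,0,0;0,0,0;0,0,0], !![0,0,1;0,1,0;1,0,0]} :
            Set (Matrix (Fin 3) (Fin 3) ℝ))) = 2 := by
  subst hm
  obtain rfl : A = !![0, 0, 0; 1, 0, 0; 0, -1, 0] :=
    Matrix.eq_of_forall_sum_smul_eq e.linearIndependent_neg_two_one_zero fun i =>
      (hA i).symm.trans (L41_lie_e3_complement e h24 h34 h14 i)
  refine ⟨Set.ext L41_isSymm_and_invariant_iff_mem_span, finrank_span_pair_eq_two ?_⟩
  refine LinearIndependent.pair_iff.mpr fun s t hst => ⟨?_, ?_⟩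
  · simpa using congrFun (congrFun hst 0) 0
  · simpa using congrFun (congrFun hst 0) 2

/-- In L(4,1) (nonzero brackets [e₂,e₄]=e₁, [e₃,e₄]=e₂), for 𝔥 = span{e₄} and the
complement 𝔪 with ordered basis m = (−e₃, e₂, e₁), the ad𝔥-invariant symmetric
bilinear forms on 𝔪 — given in coordinates by symmetric matrices M with
Aᵀ·M + M·A = 0, where A is the matrix of ad(e₄)|𝔪 in the basis m — form a
two-dimensional space spanned by D₁ = diag(1,0,0) and N (ones in entries
(1,3),(3,1),(2,2)). -/
theorem L41_invariant_quadratic_forms (L : Type*) [LieRing L] [LieAlgebra ℝ L]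
    (e : Module.Basis (Fin 4) ℝ L)
    (h24 : ⁅e 1, e 3⁆ = e 0) (h34 : ⁅e 2, e 3⁆ = e 1)
    (h12 : ⁅e 0, e 1⁆ = 0) (h13 : ⁅e 0, e 2⁆ = 0)
    (h14 : ⁅e 0, e 3⁆ = 0) (h23 : ⁅e 1, e 2⁆ = 0)
    (m : Fin 3 → L) (hm : m = ![-(e 2), e 1, e 0])
    (A : Matrix (Fin 3) (Fin 3) ℝ)
    (hA : ∀ i, ⁅e 3, m i⁆ = ∑ j, A j i • m j) :
    {M : Matrix (Fin 3) (Fin 3) ℝ | M.IsSymm ∧ Aᵀ * M + M * A = 0}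
      = (Submodule.span ℝ
          ({!![1,0,0;0,0,0;0,0,0], !![0,0,1;0,1,0;1,0,0]} :
            Set (Matrix (Fin 3) (Fin 3) ℝ)) : Set (Matrix (Fin 3) (Fin 3) ℝ)) ∧
    Module.finrank ℝ (Submodule.span ℝ
          ({!![1,0,0;0,0,0;0,0,0], !![0,0,1;0,1,0;1,0,0]} :
            Set (Matrix (Fin 3) (Fin 3) ℝ))) = 2 :=
  L41_invariant_quadratic_forms_general L e h24 h34 h14 m hm A hA
end

section
/- Let 𝔤 be the Lie algebra L(4,11) with basis e₁,...,e₄ and nonzero brackets [e₂,e₃] = e₁, [e₂,e₄] = −e₃, [e₃,e₄] = e₂. Then the function I(v) = 2y¹y⁴ + (y²)² + (y³)² for v = Σ yⁱeᵢ is invariant under the inner automorphisms e^{t·ad(e₂)}, e^{t·ad(e₃)}, and e^{t·ad(e₄)} of 𝔤. -/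
/-!
With `Q` the Gram matrix of `I` (so `I y = yᵀ Q y`), each `A = t · ad eᵢ` is skew for the form:
`Q A = -Aᵀ Q`. This relation passes to the exponential series, `Q exp(A) = exp(-Aᵀ) Q`, hence
`exp(A)ᵀ Q exp(A) = exp(Aᵀ) Q exp(A) = Q exp(-A) exp(A) = Q`, i.e. `exp(A)` is an isometry of `I`.
-/

open Matrix NormedSpace

namespace Matrix

variable {m : Type*} [Fintype m]

theorem dotProduct_mulVec_mulVec_of_transpose_mul_mul {R : Type*} [CommSemiring R]
    {Q M : Matrix m m R} (h : Mᵀ * Q * M = Q) (v : m → R) :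
    M *ᵥ v ⬝ᵥ Q *ᵥ (M *ᵥ v) = v ⬝ᵥ Q *ᵥ v :=
  calc M *ᵥ v ⬝ᵥ Q *ᵥ (M *ᵥ v) = v ⬝ᵥ (Mᵀ * Q * M) *ᵥ v := by
        rw [mulVec_mulVec, dotProduct_mulVec, vecMul_mulVec, ← dotProduct_mulVec,
          Matrix.mul_assoc]
    _ = v ⬝ᵥ Q *ᵥ v := by rw [h]

variable [DecidableEq m] {𝕂 : Type*} [RCLike 𝕂]

theorem exp_neg_mul_mul_exp_of_semiconjBy {Q A B : Matrix m m 𝕂} (h : SemiconjBy Q A B) :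
    exp (-B) * Q * exp A = Q :=
  open scoped Norms.Operator in h.exp_neg_mul_mul_exp_eq_self

theorem transpose_exp_mul_mul_exp {Q A : Matrix m m 𝕂} (h : Q * A = -Aᵀ * Q) :
    (exp A)ᵀ * Q * exp A = Q := by
  simpa [← exp_transpose] using exp_neg_mul_mul_exp_of_semiconjBy (B := -Aᵀ) h

theorem dotProduct_mulVec_exp_smul_mulVec {Q A : Matrix m m 𝕂} (h : Q * A = -Aᵀ * Q) (t : 𝕂)
    (v : m → 𝕂) :
    exp (t • A) *ᵥ v ⬝ᵥ Q *ᵥ (exp (t • A) *ᵥ v) = v ⬝ᵥ Q *ᵥ v := by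
  refine dotProduct_mulVec_mulVec_of_transpose_mul_mul (transpose_exp_mul_mul_exp ?_) v
  rw [Matrix.mul_smul, h, transpose_smul, ← smul_neg, smul_mul]

end Matrix

def l411Gram : Matrix (Fin 4) (Fin 4) ℝ := !![0,0,0,1; 0,1,0,0; 0,0,1,0; 1,0,0,0]

theorem dotProduct_l411Gram_mulVec (y : Fin 4 → ℝ) :
    y ⬝ᵥ l411Gram *ᵥ y = 2 * y 0 * y 3 + y 1 ^ 2 + y 2 ^ 2 := by
  simp [l411Gram, Fin.sum_univ_four, dotProduct]
  ring

/-- In L(4,11), with basis e₁,…,e₄ and nonzero brackets [e₂,e₃]=e₁, [e₂,e₄]=−e₃,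
[e₃,e₄]=e₂, the adjoint maps ad e₂, ad e₃, ad e₄ are given in this basis by the
matrices `adE2`, `adE3`, `adE4` below.  The function I(v) = 2y¹y⁴ + (y²)² + (y³)²
is invariant under the inner automorphisms e^{t·ad e₂}, e^{t·ad e₃}, e^{t·ad e₄}. -/
theorem L411_invariant_function
    (adE2 adE3 adE4 : Matrix (Fin 4) (Fin 4) ℝ)
    (hE2 : adE2 = !![0,0,1,0; 0,0,0,0; 0,0,0,-1; 0,0,0,0])
    (hE3 : adE3 = !![0,-1,0,0; 0,0,0,1; 0,0,0,0; 0,0,0,0])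
    (hE4 : adE4 = !![0,0,0,0; 0,0,-1,0; 0,1,0,0; 0,0,0,0])
    (I : (Fin 4 → ℝ) → ℝ)
    (hI : ∀ y : Fin 4 → ℝ, I y = 2 * y 0 * y 3 + (y 1) ^ 2 + (y 2) ^ 2) :
    ∀ (t : ℝ) (v : Fin 4 → ℝ),
      I ((NormedSpace.exp (t • adE2)).mulVec v) = I v ∧
      I ((NormedSpace.exp (t • adE3)).mulVec v) = I v ∧
      I ((NormedSpace.exp (t • adE4)).mulVec v) = I v := by
  intro t v
  simp only [hI, ← dotProduct_l411Gram_mulVec]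
  refine ⟨?_, ?_, ?_⟩ <;> refine dotProduct_mulVec_exp_smul_mulVec ?_ t v <;>
  · subst hE2 hE3 hE4
    ext i j
    fin_cases i <;> fin_cases j <;> simp [l411Gram, mul_apply, Fin.sum_univ_four]
end

section
/- Let 𝔤 = sl(2,ℝ) ⊕ ℝ as L(4,−7) with brackets [e₁,e₂] = e₁, [e₁,e₃] = −2e₂, [e₂,e₃] = e₃ and e₄ central, and let h = e₁ + e₄. Then 𝔥 = span{h} is a one-dimensional subalgebra, 𝔪 = span{e₁,e₂,e₃} is an ideal complement of 𝔥, and ad(h)|𝔪 = ad(e₁)|𝔪 is nilpotent with (ad(e₁)|𝔪)³ = 0 and (ad(e₁)|𝔪)² ≠ 0 (null isotropy type). -/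
/-! The span 𝔪 of `e 0, e 1, e 2` is the `sl(2,ℝ)` factor and `e 3` is central, so 𝔪 is an ideal
and, since `h` differs from `e 3` by an element of 𝔪, `span {h}` is a complement of 𝔪 on which
the bracket vanishes. On 𝔪, `ad (e 0)` is the nilpotent operator `e 2 ↦ -2 e 1 ↦ -2 e 0 ↦ 0`. -/

open Submodule

theorem lie_eq_zero_of_mem_span_singleton {R L : Type*} [CommRing R] [LieRing L]
    [LieAlgebra R L] {h x y : L} (hx : x ∈ R ∙ h) (hy : y ∈ R ∙ h) : ⁅x, y⁆ = 0 := by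
  obtain ⟨a, rfl⟩ := mem_span_singleton.1 hx
  obtain ⟨b, rfl⟩ := mem_span_singleton.1 hy
  simp [smul_lie, lie_smul]

theorem Module.Basis.isCompl_span_singleton_add {K V ι : Type*} [DivisionRing K]
    [AddCommGroup V] [Module K V] (b : Module.Basis ι K V) {i : ι} {m : V}
    (hm : m ∈ span K (b '' {i}ᶜ)) : IsCompl (K ∙ (m + b i)) (span K (b '' {i}ᶜ)) := by
  have hbi : b i ∉ span K (b '' {i}ᶜ) :=
    b.linearIndependent.notMem_span_image (Set.notMem_compl_iff.2 rfl)
  constructor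
  · rw [disjoint_comm, disjoint_span_singleton]
    exact fun hmem => absurd ((add_mem_cancel_left hm).1 hmem) hbi
  · rw [codisjoint_iff, eq_top_iff, ← b.span_eq, span_le]
    rintro _ ⟨j, rfl⟩
    by_cases hj : j = i
    · subst hj
      simpa using sub_mem (mem_sup_left (mem_span_singleton_self (m + b j))) (mem_sup_right hm)
    · exact mem_sup_right (subset_span ⟨j, hj, rfl⟩)

theorem lie_mem_span_of_lie_mem_span {R L : Type*} [CommRing R] [LieRing L] [LieAlgebra R L]
    {S T : Set L} (hT : span R T = ⊤) (hTS : ∀ t ∈ T, ∀ s ∈ S, ⁅t, s⁆ ∈ span R S)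
    (x : L) {y : L} (hy : y ∈ span R S) : ⁅x, y⁆ ∈ span R S := by
  have hxS : ∀ s ∈ S, ⁅x, s⁆ ∈ span R S := by
    have hx : x ∈ span R T := hT ▸ mem_top
    induction hx using span_induction with
    | mem t ht => exact hTS t ht
    | zero => simp
    | add u v _ _ hu hv => exact fun s hs => by rw [add_lie]; exact add_mem (hu s hs) (hv s hs)
    | smul a u _ hu => exact fun s hs => by rw [smul_lie]; exact smul_mem _ a (hu s hs)
  exact (span_le (p := (span R S).comap (LieAlgebra.ad R L x))).2 hxS hy

theorem L4neg7_lie_basis_mem_span {L : Type*} [LieRing L] [LieAlgebra ℝ L]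
    (e : Module.Basis (Fin 4) ℝ L)
    (h12 : ⁅e 0, e 1⁆ = e 0) (h13 : ⁅e 0, e 2⁆ = (-2 : ℝ) • e 1) (h23 : ⁅e 1, e 2⁆ = e 2)
    (h14 : ⁅e 0, e 3⁆ = 0) (h24 : ⁅e 1, e 3⁆ = 0) (h34 : ⁅e 2, e 3⁆ = 0) :
    ∀ t ∈ Set.range e, ∀ s ∈ ({e 0, e 1, e 2} : Set L), ⁅t, s⁆ ∈ span ℝ {e 0, e 1, e 2} := by
  have h21 : ⁅e 1, e 0⁆ = -e 0 := by rw [← lie_skew, h12]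
  have h31 : ⁅e 2, e 0⁆ = -((-2 : ℝ) • e 1) := by rw [← lie_skew, h13]
  have h32 : ⁅e 2, e 1⁆ = -e 2 := by rw [← lie_skew, h23]
  have h41 : ⁅e 3, e 0⁆ = 0 := by rw [← lie_skew, h14, neg_zero]
  have h42 : ⁅e 3, e 1⁆ = 0 := by rw [← lie_skew, h24, neg_zero]
  have h43 : ⁅e 3, e 2⁆ = 0 := by rw [← lie_skew, h34, neg_zero]
  have he0 : e 0 ∈ span ℝ {e 0, e 1, e 2} := subset_span (by simp)
  have he1 : e 1 ∈ span ℝ {e 0, e 1, e 2} := subset_span (by simp)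
  have he2 : e 2 ∈ span ℝ {e 0, e 1, e 2} := subset_span (by simp)
  rintro _ ⟨i, rfl⟩ s hs
  rcases hs with rfl | rfl | rfl <;> fin_cases i <;>
    simp only [Fin.zero_eta, Fin.mk_one, Fin.reduceFinMk, lie_self, h12, h13, h23,
      h21, h31, h32, h41, h42, h43] <;>
    apply_rules [zero_mem, neg_mem, smul_mem, he0, he1, he2]

/-- In L(4,−7) = sl(2,ℝ) ⊕ ℝ with brackets [e₁,e₂]=e₁, [e₁,e₃]=−2e₂, [e₂,e₃]=e₃
and e₄ central, for h = e₁ + e₄: 𝔥 = span{h} is a one-dimensional subalgebra,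
𝔪 = span{e₁,e₂,e₃} is an ideal complement of 𝔥, ad(h)|𝔪 = ad(e₁)|𝔪, and this map
is nilpotent with cube zero but square nonzero: null isotropy type. -/
theorem L4neg7_null (L : Type*) [LieRing L] [LieAlgebra ℝ L]
    (e : Module.Basis (Fin 4) ℝ L)
    (h12 : ⁅e 0, e 1⁆ = e 0) (h13 : ⁅e 0, e 2⁆ = (-2 : ℝ) • e 1)
    (h23 : ⁅e 1, e 2⁆ = e 2)
    (h14 : ⁅e 0, e 3⁆ = 0) (h24 : ⁅e 1, e 3⁆ = 0) (h34 : ⁅e 2, e 3⁆ = 0)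
    (h : L) (hh : h = e 0 + e 3)
    (H M : Submodule ℝ L)
    (hH : H = Submodule.span ℝ {h})
    (hM : M = Submodule.span ℝ {e 0, e 1, e 2}) :
    (∀ x ∈ H, ∀ y ∈ H, ⁅x, y⁆ ∈ H) ∧
    H ⊔ M = ⊤ ∧ H ⊓ M = ⊥ ∧
    (∀ x : L, ∀ y ∈ M, ⁅x, y⁆ ∈ M) ∧
    (∀ m ∈ M, ⁅h, m⁆ = ⁅e 0, m⁆) ∧
    (∀ m ∈ M, ⁅e 0, ⁅e 0, ⁅e 0, m⁆⁆⁆ = 0) ∧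
    (∃ m ∈ M, ⁅e 0, ⁅e 0, m⁆⁆ ≠ 0) := by
  subst hH hM hh
  have hcompl : IsCompl (ℝ ∙ (e 0 + e 3)) (span ℝ {e 0, e 1, e 2}) := by
    rw [show ({e 0, e 1, e 2} : Set L) = e '' {3}ᶜ by
      rw [show ({3}ᶜ : Set (Fin 4)) = {0, 1, 2} by ext i; fin_cases i <;> simp]
      simp only [Set.image_insert_eq, Set.image_singleton]]
    exact e.isCompl_span_singleton_add (subset_span ⟨0, by simp, rfl⟩)
  refine ⟨fun x hx y hy => ?_, hcompl.sup_eq_top, hcompl.inf_eq_bot,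
    lie_mem_span_of_lie_mem_span e.span_eq (L4neg7_lie_basis_mem_span e h12 h13 h23 h14 h24 h34),
    fun m hm => ?_, fun m hm => ?_, ⟨e 2, subset_span (by simp), ?_⟩⟩
  · exact lie_eq_zero_of_mem_span_singleton hx hy ▸ zero_mem _
  · refine LinearMap.eqOn_span' (f := LieAlgebra.ad ℝ L (e 0 + e 3))
      (g := LieAlgebra.ad ℝ L (e 0)) ?_ hm
    rintro _ (rfl | rfl | rfl) <;> simp [← lie_skew (e 3), h14, h24, h34]
  · refine LinearMap.eqOn_span' (f := LieAlgebra.ad ℝ L (e 0) ∘ₗ LieAlgebra.ad ℝ L (e 0) ∘ₗ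
      LieAlgebra.ad ℝ L (e 0)) (g := 0) ?_ hm
    rintro _ (rfl | rfl | rfl) <;> simp [h12, h13, lie_smul]
  · rw [h13, lie_smul, h12, smul_ne_zero_iff]
    exact ⟨by norm_num, e.ne_zero 0⟩
end

section
/- Let 𝔤 be the Lie algebra L(4,8) with nonzero brackets [e₂,e₃] = e₁, [e₂,e₄] = e₂, [e₃,e₄] = −e₃. Then the functions I(v) = y²y³ − y¹y⁴ and J(v) = y⁴ (where v = Σ yⁱeᵢ) are invariant under the inner automorphisms e^{t·ad(e₂)} and e^{t·ad(e₃)} of 𝔤. -/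
/-!
Both `ad e₂` and `ad e₃` square to zero, so `exp (t • ad eᵢ) = 1 + t • ad eᵢ` and the two
automorphisms act by `v ↦ (y¹ + t y³, y² + t y⁴, y³, y⁴)` and `v ↦ (y¹ - t y², y², y³ - t y⁴, y⁴)`;
both fix `y⁴`, and the correction terms cancel in `y²y³ − y¹y⁴`.
-/

open Matrix

theorem NormedSpace.exp_eq_one_add_of_sq_eq_zero {𝔸 : Type*} [Ring 𝔸] [Algebra ℚ 𝔸]
    [TopologicalSpace 𝔸] [IsTopologicalRing 𝔸] {x : 𝔸} (hx : x ^ 2 = 0) :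
    NormedSpace.exp x = 1 + x := by
  rw [NormedSpace.exp_eq_tsum_rat]
  dsimp only
  rw [tsum_eq_sum (s := Finset.range 2)]
  · simp [Finset.sum_range_succ]
  · intro n hn
    rw [pow_eq_zero_of_le (not_lt.1 (Finset.mem_range.not.1 hn)) hx, smul_zero]

theorem Matrix.exp_smul_mulVec_of_sq_eq_zero {n : Type*} [Fintype n] [DecidableEq n]
    {A : Matrix n n ℝ} (hA : A ^ 2 = 0) (t : ℝ) (v : n → ℝ) :
    NormedSpace.exp (t • A) *ᵥ v = v + t • A *ᵥ v := by
  rw [NormedSpace.exp_eq_one_add_of_sq_eq_zero (by rw [smul_pow, hA, smul_zero]),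
    add_mulVec, one_mulVec, smul_mulVec]

namespace L48

theorem adE2_mulVec (v : Fin 4 → ℝ) :
    !![0,0,1,0; 0,0,0,1; 0,0,0,0; 0,0,0,0] *ᵥ v = ![v 2, v 3, 0, 0] := by
  ext i; fin_cases i <;> simp [mulVec, dotProduct, Fin.sum_univ_four]

theorem adE3_mulVec (v : Fin 4 → ℝ) :
    !![0,-1,0,0; 0,0,0,0; 0,0,0,-1; 0,0,0,0] *ᵥ v = ![-v 1, 0, -v 3, 0] := by
  ext i; fin_cases i <;> simp [mulVec, dotProduct, Fin.sum_univ_four]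

theorem adE2_sq : (!![0,0,1,0; 0,0,0,1; 0,0,0,0; 0,0,0,0] : Matrix (Fin 4) (Fin 4) ℝ) ^ 2 = 0 :=
  ext_iff_mulVec.2 fun v => by
    rw [sq, ← mulVec_mulVec, adE2_mulVec, adE2_mulVec, zero_mulVec]
    simp

theorem adE3_sq : (!![0,-1,0,0; 0,0,0,0; 0,0,0,-1; 0,0,0,0] : Matrix (Fin 4) (Fin 4) ℝ) ^ 2 = 0 :=
  ext_iff_mulVec.2 fun v => by
    rw [sq, ← mulVec_mulVec, adE3_mulVec, adE3_mulVec, zero_mulVec]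
    simp

end L48

/-- In L(4,8), with basis e₁,…,e₄ and nonzero brackets [e₂,e₃]=e₁, [e₂,e₄]=e₂,
[e₃,e₄]=−e₃, the adjoint maps ad e₂ and ad e₃ have the matrices `adE2`, `adE3`
below in this basis.  The functions I(v) = y²y³ − y¹y⁴ and J(v) = y⁴ are
invariant under the inner automorphisms e^{t·ad e₂} and e^{t·ad e₃}. -/
theorem L48_invariants
    (adE2 adE3 : Matrix (Fin 4) (Fin 4) ℝ)
    (hE2 : adE2 = !![0,0,1,0; 0,0,0,1; 0,0,0,0; 0,0,0,0])
    (hE3 : adE3 = !![0,-1,0,0; 0,0,0,0; 0,0,0,-1; 0,0,0,0])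
    (I J : (Fin 4 → ℝ) → ℝ)
    (hI : ∀ y : Fin 4 → ℝ, I y = y 1 * y 2 - y 0 * y 3)
    (hJ : ∀ y : Fin 4 → ℝ, J y = y 3) :
    ∀ (t : ℝ) (v : Fin 4 → ℝ),
      I ((NormedSpace.exp (t • adE2)).mulVec v) = I v ∧
      I ((NormedSpace.exp (t • adE3)).mulVec v) = I v ∧
      J ((NormedSpace.exp (t • adE2)).mulVec v) = J v ∧
      J ((NormedSpace.exp (t • adE3)).mulVec v) = J v := by
  intro t v
  subst hE2 hE3
  simp only [exp_smul_mulVec_of_sq_eq_zero L48.adE2_sq, exp_smul_mulVec_of_sq_eq_zero L48.adE3_sq,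
    L48.adE2_mulVec, L48.adE3_mulVec, hI, hJ]
  refine ⟨?_, ?_, ?_, ?_⟩ <;> simp <;> ring
end

section
/- Let 𝔤 be the Lie algebra L(4,8) with nonzero brackets [e₂,e₃] = e₁, [e₂,e₄] = e₂, [e₃,e₄] = −e₃, and let h = e₂ + e₃, 𝔪 = span{e₄, e₂ − e₃, 2e₁}. Then 𝔥 = span{h} is a subalgebra, 𝔪 is a symmetric complement of 𝔥 ([𝔥,𝔪] ⊆ 𝔪 and [𝔪,𝔪] ⊆ 𝔥), and ad(h)|𝔪 is nilpotent of index exactly 3 (null isotropy). -/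
/-!
The basis is indexed from `0`, so `e i` is the paper's `e_{i+1}`. The centre contains `e 0`,
and `ad h` moves the generators of `𝔪` along the chain `e 3 ↦ e 1 - e 2 ↦ -2 • e 0 ↦ 0`, which
gives both `[𝔥, 𝔪] ⊆ 𝔪` and the nilpotency index `3`; the only nonzero bracket inside `𝔪` is
`⁅e 1 - e 2, e 3⁆ = h`. The functional `e.coord 1 + e.coord 2` vanishes on `𝔪` but not on `h`.
-/

open Submodule LieAlgebra

theorem lie_mem_of_mem_span_of_mem_span {R L : Type*} [CommRing R] [LieRing L] [LieAlgebra R L]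
    {s t : Set L} {N : Submodule R L} (hst : ∀ a ∈ s, ∀ b ∈ t, ⁅a, b⁆ ∈ N)
    {x y : L} (hx : x ∈ span R s) (hy : y ∈ span R t) : ⁅x, y⁆ ∈ N := by
  have hspan :
      map₂ (LieModule.toEnd R L L : L →ₗ[R] Module.End R L) (span R s) (span R t) ≤ N := by
    rw [map₂_span_span, span_le]
    rintro _ ⟨a, ha, b, hb, rfl⟩
    exact hst a ha b hb
  exact map₂_le.mp hspan x hx y hy

theorem lie_mem_span_singleton {R L : Type*} [CommRing R] [LieRing L] [LieAlgebra R L]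
    {x y z : L} (hx : x ∈ span R {z}) (hy : y ∈ span R {z}) : ⁅x, y⁆ ∈ span R {z} := by
  refine lie_mem_of_mem_span_of_mem_span ?_ hx hy
  rintro _ rfl _ rfl
  rw [lie_self]
  exact zero_mem _

theorem lie_lie_lie_eq_zero_of_mem_span {R L : Type*} [CommRing R] [LieRing L] [LieAlgebra R L]
    {s : Set L} {x : L} (hs : ∀ b ∈ s, ⁅x, ⁅x, ⁅x, b⁆⁆⁆ = 0) {m : L} (hm : m ∈ span R s) :
    ⁅x, ⁅x, ⁅x, m⁆⁆⁆ = 0 :=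
  LinearMap.eqOn_span (f := ad R L x ∘ₗ ad R L x ∘ₗ ad R L x) (g := 0) hs hm

section BasisOfFour

variable {K V : Type*} [Field K] [NeZero (2 : K)] [AddCommGroup V] [Module K V]

theorem span_sum_sup_eq_top (e : Module.Basis (Fin 4) K V) :
    span K {e 1 + e 2} ⊔ span K {e 3, e 1 - e 2, (2 : K) • e 0} = ⊤ := by
  set S := span K {e 1 + e 2} ⊔ span K {e 3, e 1 - e 2, (2 : K) • e 0}
  have hsum : e 1 + e 2 ∈ S := mem_sup_left (subset_span rfl)
  have hthree : e 3 ∈ S := mem_sup_right (subset_span (by simp))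
  have hdiff : e 1 - e 2 ∈ S := mem_sup_right (subset_span (by simp))
  have hzero : (2 : K) • e 0 ∈ S := mem_sup_right (subset_span (by simp))
  have hone : e 1 ∈ S := by
    refine (S.smul_mem_iff (two_ne_zero (α := K))).mp ?_
    rw [show (2 : K) • e 1 = e 1 + e 2 + (e 1 - e 2) by module]
    exact S.add_mem hsum hdiff
  have htwo : e 2 ∈ S := by
    refine (S.smul_mem_iff (two_ne_zero (α := K))).mp ?_
    rw [show (2 : K) • e 2 = e 1 + e 2 - (e 1 - e 2) by module]
    exact S.sub_mem hsum hdiff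
  rw [eq_top_iff, ← e.span_eq, span_le]
  rintro _ ⟨i, rfl⟩
  fin_cases i
  exacts [(S.smul_mem_iff two_ne_zero).mp hzero, hone, htwo, hthree]

theorem span_sum_inf_eq_bot (e : Module.Basis (Fin 4) K V) :
    span K {e 1 + e 2} ⊓ span K {e 3, e 1 - e 2, (2 : K) • e 0} = ⊥ := by
  rw [← disjoint_iff, disjoint_comm, disjoint_span_singleton]
  intro hmem
  have hker : span K {e 3, e 1 - e 2, (2 : K) • e 0} ≤ 
      LinearMap.ker (e.coord 1 + e.coord 2) := by
    rw [span_le]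
    rintro _ (rfl | rfl | rfl) <;> simp
  exact (two_ne_zero (α := K) (by simpa [one_add_one_eq_two] using hker hmem)).elim

end BasisOfFour

structure IsL48Basis {L : Type*} [LieRing L] [LieAlgebra ℝ L] (e : Module.Basis (Fin 4) ℝ L) :
    Prop where
  lie_one_two : ⁅e 1, e 2⁆ = e 0
  lie_one_three : ⁅e 1, e 3⁆ = e 1
  lie_two_three : ⁅e 2, e 3⁆ = -e 2
  lie_zero_one : ⁅e 0, e 1⁆ = 0
  lie_zero_two : ⁅e 0, e 2⁆ = 0
  lie_zero_three : ⁅e 0, e 3⁆ = 0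

namespace IsL48Basis

variable {L : Type*} [LieRing L] [LieAlgebra ℝ L] {e : Module.Basis (Fin 4) ℝ L}

theorem lie_zero_left (he : IsL48Basis e) (x : L) : ⁅e 0, x⁆ = 0 := by
  have had : ad ℝ L (e 0) = 0 := e.ext fun i ↦ by
    fin_cases i
    exacts [lie_self _, he.lie_zero_one, he.lie_zero_two, he.lie_zero_three]
  simpa using LinearMap.congr_fun had x

theorem lie_zero_right (he : IsL48Basis e) (x : L) : ⁅x, e 0⁆ = 0 := by
  rw [← lie_skew, he.lie_zero_left, neg_zero]

theorem lie_sum_three (he : IsL48Basis e) : ⁅e 1 + e 2, e 3⁆ = e 1 - e 2 := by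
  rw [add_lie, he.lie_one_three, he.lie_two_three, sub_eq_add_neg]

theorem lie_sum_diff (he : IsL48Basis e) : ⁅e 1 + e 2, e 1 - e 2⁆ = -((2 : ℝ) • e 0) := by
  rw [lie_sub, add_lie, add_lie, lie_self, lie_self, he.lie_one_two, ← lie_skew (e 2),
    he.lie_one_two]
  module

theorem lie_diff_three (he : IsL48Basis e) : ⁅e 1 - e 2, e 3⁆ = e 1 + e 2 := by
  rw [sub_lie, he.lie_one_three, he.lie_two_three, sub_neg_eq_add]

theorem lie_three_diff (he : IsL48Basis e) : ⁅e 3, e 1 - e 2⁆ = -(e 1 + e 2) := by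
  rw [← lie_skew, he.lie_diff_three]

theorem lie_mem_span_sum (he : IsL48Basis e) :
    ∀ a ∈ ({e 3, e 1 - e 2, (2 : ℝ) • e 0} : Set L),
      ∀ b ∈ ({e 3, e 1 - e 2, (2 : ℝ) • e 0} : Set L), ⁅a, b⁆ ∈ span ℝ {e 1 + e 2} := by
  rintro a (rfl | rfl | rfl) b (rfl | rfl | rfl) <;>
    simp [-neg_add_rev, he.lie_diff_three, he.lie_three_diff, he.lie_zero_left,
      he.lie_zero_right]

theorem sum_lie_mem (he : IsL48Basis e) :
    ∀ a ∈ ({e 1 + e 2} : Set L),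
      ∀ b ∈ ({e 3, e 1 - e 2, (2 : ℝ) • e 0} : Set L),
        ⁅a, b⁆ ∈ span ℝ {e 3, e 1 - e 2, (2 : ℝ) • e 0} := by
  rintro _ rfl b (rfl | rfl | rfl)
  · rw [he.lie_sum_three]
    exact subset_span (by simp)
  · rw [he.lie_sum_diff]
    exact neg_mem (subset_span (by simp))
  · rw [lie_smul, he.lie_zero_right, smul_zero]
    exact zero_mem _

theorem sum_lie_sum_lie_sum_lie_eq_zero (he : IsL48Basis e) :
    ∀ b ∈ ({e 3, e 1 - e 2, (2 : ℝ) • e 0} : Set L),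
      ⁅e 1 + e 2, ⁅e 1 + e 2, ⁅e 1 + e 2, b⁆⁆⁆ = 0 := by
  have hzero : ⁅e 1 + e 2, (2 : ℝ) • e 0⁆ = 0 := by rw [lie_smul, he.lie_zero_right, smul_zero]
  rintro b (rfl | rfl | rfl)
  · rw [he.lie_sum_three, he.lie_sum_diff, lie_neg, hzero, neg_zero]
  · rw [he.lie_sum_diff, lie_neg, hzero, neg_zero, lie_zero]
  · rw [hzero, lie_zero, lie_zero]

theorem sum_lie_sum_lie_three_ne_zero (he : IsL48Basis e) :
    ⁅e 1 + e 2, ⁅e 1 + e 2, e 3⁆⁆ ≠ 0 := by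
  rw [he.lie_sum_three, he.lie_sum_diff, neg_ne_zero, smul_ne_zero_iff]
  exact ⟨two_ne_zero, e.ne_zero 0⟩

end IsL48Basis

/-- In L(4,8), with nonzero brackets [e₂,e₃]=e₁, [e₂,e₄]=e₂, [e₃,e₄]=−e₃, for
h = e₂+e₃ and 𝔪 = span{e₄, e₂−e₃, 2e₁}: 𝔥 = span{h} is a subalgebra, 𝔪 is a
symmetric complement of 𝔥 (𝔤 = 𝔥 ⊕ 𝔪, [𝔥,𝔪] ⊆ 𝔪, [𝔪,𝔪] ⊆ 𝔥), and ad(h)|𝔪 is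
nilpotent of index exactly 3 (null isotropy). -/
theorem L48_null_isotropy (L : Type*) [LieRing L] [LieAlgebra ℝ L]
    (e : Module.Basis (Fin 4) ℝ L)
    (h23 : ⁅e 1, e 2⁆ = e 0) (h24 : ⁅e 1, e 3⁆ = e 1) (h34 : ⁅e 2, e 3⁆ = -e 2)
    (h12 : ⁅e 0, e 1⁆ = 0) (h13 : ⁅e 0, e 2⁆ = 0) (h14 : ⁅e 0, e 3⁆ = 0)
    (h : L) (hh : h = e 1 + e 2)
    (H M : Submodule ℝ L)
    (hH : H = Submodule.span ℝ {h})
    (hM : M = Submodule.span ℝ {e 3, e 1 - e 2, (2 : ℝ) • e 0}) :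
    (∀ x ∈ H, ∀ y ∈ H, ⁅x, y⁆ ∈ H) ∧
    H ⊔ M = ⊤ ∧ H ⊓ M = ⊥ ∧
    (∀ x ∈ H, ∀ y ∈ M, ⁅x, y⁆ ∈ M) ∧
    (∀ x ∈ M, ∀ y ∈ M, ⁅x, y⁆ ∈ H) ∧
    (∀ m ∈ M, ⁅h, ⁅h, ⁅h, m⁆⁆⁆ = 0) ∧
    (∃ m ∈ M, ⁅h, ⁅h, m⁆⁆ ≠ 0) := by
  subst hh hH hM
  have he : IsL48Basis e := ⟨h23, h24, h34, h12, h13, h14⟩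
  refine ⟨fun x hx y hy ↦ lie_mem_span_singleton hx hy,
    span_sum_sup_eq_top e, span_sum_inf_eq_bot e,
    fun x hx y hy ↦ lie_mem_of_mem_span_of_mem_span he.sum_lie_mem hx hy,
    fun x hx y hy ↦ lie_mem_of_mem_span_of_mem_span he.lie_mem_span_sum hx hy,
    fun m hm ↦ lie_lie_lie_eq_zero_of_mem_span he.sum_lie_sum_lie_sum_lie_eq_zero hm,
    e 3, subset_span (by simp), he.sum_lie_sum_lie_three_ne_zero⟩
end

section
/- Let 𝔤 be the Lie algebra L(3,5) = sl(2,ℝ) with brackets [e₁,e₂] = e₁, [e₁,e₃] = −2e₂, [e₂,e₃] = e₃, let h = ½(e₁−e₃) and 𝔪 = span{m₁, m₂} where m₁ = ½(e₁+e₃), m₂ = e₂. Then the symmetric bilinear forms B on 𝔪 satisfying B([h,u],v) + B(u,[h,v]) = 0 for all u,v ∈ 𝔪 form a one-dimensional space spanned by the form making m₁, m₂ orthonormal; in particular this Lie algebra pair admits an ad𝔥-invariant positive-definite inner product on 𝔪 (a Riemannian isotropy case missing from Petrov's G₃-on-V₂ list). -/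
/-!
`h = ½(e₁ - e₃)` spans a compact Cartan subalgebra of `sl(2,ℝ)`: `ad h` acts on `𝔪` by the
infinitesimal rotation `m₁ ↦ -m₂, m₂ ↦ m₁`, whose matrix `J` is skew. An `ad h`-invariant
symmetric form is therefore a symmetric matrix commuting with `J`, i.e. a multiple of the identity.
-/

open Matrix

section SlTwo

variable {L : Type*} [LieRing L] [LieAlgebra ℝ L] {x y z : L}

lemma lie_half_sub_half_add (hxz : ⁅x, z⁆ = (-2 : ℝ) • y) :
    ⁅(1/2 : ℝ) • (x - z), (1/2 : ℝ) • (x + z)⁆ = -y := by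
  have hzx : ⁅z, x⁆ = -((-2 : ℝ) • y) := by rw [← lie_skew, hxz]
  simp only [lie_smul, smul_lie, lie_add, sub_lie, lie_self, hxz, hzx]
  module

lemma lie_half_sub (hxy : ⁅x, y⁆ = x) (hyz : ⁅y, z⁆ = z) :
    ⁅(1/2 : ℝ) • (x - z), y⁆ = (1/2 : ℝ) • (x + z) := by
  have hzy : ⁅z, y⁆ = -z := by rw [← lie_skew, hyz]
  simp only [smul_lie, sub_lie, hxy, hzy, sub_neg_eq_add]

end SlTwo

lemma Module.Basis.linearIndependent_half_add_pair {R M : Type*} [Field R] [CharZero R]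
    [AddCommGroup M] [Module R M] (e : Module.Basis (Fin 3) R M) :
    LinearIndependent R ![(1/2 : R) • (e 0 + e 2), e 1] := by
  refine LinearIndependent.pair_iff.2 fun s t hst => ?_
  have hcoord := congrArg e.repr hst
  have h0 := congrArg (· 0) hcoord
  have h1 := congrArg (· 1) hcoord
  simp at h0 h1
  exact ⟨h0, h1⟩

lemma LinearIndependent.matrix_eq_of_sum_smul_eq {R M ι : Type*} [Fintype ι] [Semiring R]
    [AddCommMonoid M] [Module R M] {v : ι → M} (hv : LinearIndependent R v)
    {A B : Matrix ι ι R} (hAB : ∀ i, ∑ j, A j i • v j = ∑ j, B j i • v j) : A = B := by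
  ext j i
  exact Fintype.linearIndependent_iffₛ.1 hv _ _ (hAB i) j

def rotationGenerator : Matrix (Fin 2) (Fin 2) ℝ := !![0, 1; -1, 0]

lemma transpose_rotationGenerator : rotationGeneratorᵀ = -rotationGenerator := by
  ext i j
  fin_cases i <;> fin_cases j <;> simp [rotationGenerator]

lemma isSymm_and_rotationGenerator_invariant_iff (M : Matrix (Fin 2) (Fin 2) ℝ) :
    M.IsSymm ∧ rotationGeneratorᵀ * M + M * rotationGenerator = 0 ↔ ∃ a : ℝ, a • 1 = M := by
  obtain ⟨a, b, c, d, rfl⟩ : ∃ a b c d, M = !![a, b; c, d] := ⟨_, _, _, _, M.eta_fin_two⟩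
  rw [transpose_rotationGenerator, neg_mul, neg_add_eq_zero]
  simp [rotationGenerator, Matrix.IsSymm, Matrix.one_fin_two, ← Matrix.ext_iff,
    Fin.forall_fin_two]
  grind

/-- In L(3,5) = sl(2,ℝ) with brackets [e₁,e₂]=e₁, [e₁,e₃]=−2e₂, [e₂,e₃]=e₃, for
h = ½(e₁−e₃) and 𝔪 with ordered basis m = (½(e₁+e₃), e₂), the ad𝔥-invariant
symmetric bilinear forms on 𝔪 — given in coordinates by symmetric matrices M with
Aᵀ·M + M·A = 0, where A is the matrix of ad(h)|𝔪 in the basis m — form a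
one-dimensional space spanned by the identity matrix (the form making m₁,m₂
orthonormal), which is positive definite: this Lie algebra pair admits an
ad𝔥-invariant Riemannian inner product (missing from Petrov's G₃-on-V₂ list). -/
theorem L35_riemannian_isotropy (L : Type*) [LieRing L] [LieAlgebra ℝ L]
    (e : Module.Basis (Fin 3) ℝ L)
    (h12 : ⁅e 0, e 1⁆ = e 0) (h13 : ⁅e 0, e 2⁆ = (-2 : ℝ) • e 1)
    (h23 : ⁅e 1, e 2⁆ = e 2)
    (h : L) (hh : h = (1/2 : ℝ) • (e 0 - e 2))
    (m : Fin 2 → L) (hm : m = ![(1/2 : ℝ) • (e 0 + e 2), e 1])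
    (A : Matrix (Fin 2) (Fin 2) ℝ)
    (hA : ∀ i, ⁅h, m i⁆ = ∑ j, A j i • m j) :
    {M : Matrix (Fin 2) (Fin 2) ℝ | M.IsSymm ∧ Aᵀ * M + M * A = 0}
      = (Submodule.span ℝ ({1} : Set (Matrix (Fin 2) (Fin 2) ℝ))
          : Set (Matrix (Fin 2) (Fin 2) ℝ)) ∧
    (1 : Matrix (Fin 2) (Fin 2) ℝ).PosDef := by
  have hA_rot : A = rotationGenerator := by
    subst hm hh
    refine e.linearIndependent_half_add_pair.matrix_eq_of_sum_smul_eq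
      (Fin.forall_fin_two.2 ⟨?_, ?_⟩)
    · rw [← hA, cons_val_zero, lie_half_sub_half_add h13]
      simp [rotationGenerator]
    · rw [← hA, cons_val_one, cons_val_zero, lie_half_sub h12 h23]
      simp [rotationGenerator]
  subst hA_rot
  refine ⟨Set.ext fun M => ?_, PosDef.one⟩
  rw [SetLike.mem_coe, Submodule.mem_span_singleton]
  exact isSymm_and_rotationGenerator_invariant_iff M
end
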